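/- Let Q be a quantity space over a field K with basis E = {e_1, …, e_n}, and let μ_E(x) denote the measure of x relative to E. Then: (1) μ_E(xy) = μ_E(x)·μ_E(y) for all x, y ∈ Q; (2) if μ_E(x) ≠ 0 then x is invertible and μ_E(x⁻¹) = μ_E(x)⁻¹; (3) μ_E(λ·x) = λ·μ_E(x) for all λ ∈ K and x ∈ Q. -/

import Mathlib

/-!
Expanding `x = μx • u` and `y = μy • v` with `u, v` monomials in the basis, the scaling axioms give
`x * y = (μx * μy) • (u * v)`, `λ • x = (λ * μx) • u` and, when `μx ≠ 0`, the inverse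
`μx⁻¹ • u⁻¹` of `x`. Since `u * v` and `u⁻¹` are again monomials, uniqueness of the expansion
identifies the measures.
-/

/-- A scalable monoid over a (unital, associative) ring `R`: a monoid `X` with a scaling
action `• : R × X → X` such that `1 • x = x`, `(a*b) • x = a • (b • x)`, and
`a • (x*y) = (a • x) * y = x * (a • y)`. -/
class ScalableMonoid (R X : Type*) [Ring R] [Monoid X] extends SMul R X where
  one_smul : ∀ x : X, (1 : R) • x = x
  mul_smul : ∀ (a b : R) (x : X), (a * b) • x = a • (b • x)
  smul_mul_assoc : ∀ (a : R) (x y : X), a • (x * y) = (a • x) * y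
  mul_smul_comm : ∀ (a : R) (x y : X), a • (x * y) = x * (a • y)

/-- A finite quantity-space basis for a commutative scalable monoid `Q` over a field `K`:
a finite family `e₁, …, eₙ` of invertible elements of `Q` such that every `x ∈ Q` has a
unique expansion `x = μ • (e₁^{k₁} ⋯ eₙ^{kₙ})` with `μ ∈ K` and integers `kᵢ`
(negative powers taken via inverses, i.e. in the group of units). -/
def IsQBasis (K : Type*) {Q : Type*} [Field K] [CommMonoid Q] [ScalableMonoid K Q]
    {n : ℕ} (e : Fin n → Qˣ) : Prop :=
  ∀ x : Q, ∃! p : K × (Fin n → ℤ),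
    x = p.1 • (((∏ i, (e i) ^ (p.2 i)) : Qˣ) : Q)

namespace ScalableMonoid

section Ring

variable {R X : Type*} [Ring R] [Monoid X] [ScalableMonoid R X]

theorem smul_mul_smul (a b : R) (x y : X) : a • x * b • y = (a * b) • (x * y) := by
  rw [mul_smul, mul_smul_comm, smul_mul_assoc]

end Ring

section DivisionRing

variable {K X : Type*} [DivisionRing K] [Monoid X] [ScalableMonoid K X]

theorem smul_mul_inv_smul {μ : K} (hμ : μ ≠ 0) (u : Xˣ) :
    μ • (u : X) * μ⁻¹ • ((u⁻¹ : Xˣ) : X) = 1 := by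
  rw [smul_mul_smul, mul_inv_cancel₀ hμ, Units.mul_inv, one_smul]

theorem inv_smul_mul_smul {μ : K} (hμ : μ ≠ 0) (u : Xˣ) :
    μ⁻¹ • ((u⁻¹ : Xˣ) : X) * μ • (u : X) = 1 := by
  rw [smul_mul_smul, inv_mul_cancel₀ hμ, Units.inv_mul, one_smul]

end DivisionRing

end ScalableMonoid

theorem IsQBasis.coeff_unique {K Q : Type*} [Field K] [CommMonoid Q] [ScalableMonoid K Q]
    {n : ℕ} {e : Fin n → Qˣ} (he : IsQBasis K e) {w : Q} {a b : K} {j k : Fin n → ℤ}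
    (ha : w = a • (((∏ i, (e i) ^ (j i)) : Qˣ) : Q))
    (hb : w = b • (((∏ i, (e i) ^ (k i)) : Qˣ) : Q)) : a = b :=
  congrArg Prod.fst ((he w).unique (y₁ := (a, j)) (y₂ := (b, k)) ha hb)

/-- Measures relative to a basis `E`: (1) `μ_E(xy) = μ_E(x)μ_E(y)`;
(2) if `μ_E(x) ≠ 0` then `x` is invertible and `μ_E(x⁻¹) = μ_E(x)⁻¹`;
(3) `μ_E(λ • x) = λ μ_E(x)`. -/
theorem stmt15 {K Q : Type*} [Field K] [CommMonoid Q] [ScalableMonoid K Q]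
    {n : ℕ} (e : Fin n → Qˣ) (he : IsQBasis K e)
    (x y : Q) (μx μy : K) (kx ky : Fin n → ℤ)
    (hx : x = μx • (((∏ i, (e i) ^ (kx i)) : Qˣ) : Q))
    (hy : y = μy • (((∏ i, (e i) ^ (ky i)) : Qˣ) : Q)) :
    (∀ (μ : K) (k : Fin n → ℤ),
      x * y = μ • (((∏ i, (e i) ^ (k i)) : Qˣ) : Q) → μ = μx * μy) ∧
    (μx ≠ 0 → ∃ z : Q, x * z = 1 ∧ z * x = 1 ∧
      ∀ (μ : K) (k : Fin n → ℤ),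
        z = μ • (((∏ i, (e i) ^ (k i)) : Qˣ) : Q) → μ = μx⁻¹) ∧
    (∀ (lam μ : K) (k : Fin n → ℤ),
      lam • x = μ • (((∏ i, (e i) ^ (k i)) : Qˣ) : Q) → μ = lam * μx) := by
  have hmul : x * y = (μx * μy) • (((∏ i, (e i) ^ (kx i + ky i)) : Qˣ) : Q) := by
    simp only [hx, hy, ScalableMonoid.smul_mul_smul, zpow_add, Finset.prod_mul_distrib,
      Units.val_mul]
  have hinv : ∏ i, (e i) ^ (-kx i) = (∏ i, (e i) ^ (kx i))⁻¹ := by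
    simp only [zpow_neg, Finset.prod_inv_distrib]
  have hsmul (lam : K) : lam • x = (lam * μx) • (((∏ i, (e i) ^ (kx i)) : Qˣ) : Q) := by
    rw [hx, ScalableMonoid.mul_smul]
  refine ⟨fun μ k h => he.coeff_unique h hmul, fun hμx => ?_,
    fun lam μ k h => he.coeff_unique h (hsmul lam)⟩
  refine ⟨μx⁻¹ • (((∏ i, (e i) ^ (-kx i)) : Qˣ) : Q), ?_, ?_,
    fun μ k h => he.coeff_unique h rfl⟩
  · rw [hx, hinv, ScalableMonoid.smul_mul_inv_smul hμx]
  · rw [hx, hinv, ScalableMonoid.inv_smul_mul_smul hμx]
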